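/- Let L be closed under a binary connective ∧ and a unary connective ¬, and let C satisfy Weak Compactness, Inclusion, Cumulativity, ∧-R, ¬-R1 and ¬-R2. Then there is a restricted fC-model ⟨M, ⊨, f⟩ that behaves classically with respect to ∧ and ¬ (for every m ∈ M: m ⊨ a∧b iff m ⊨ a and m ⊨ b; m ⊨ ¬a iff m ⊭ a) such that C(A) = Th(f(Mod(A))) for every A ⊆ L. -/

import Mathlib

/-- `ModSet sat A` is the set of models satisfying every formula of `A`. -/
def ModSet {M L : Type*} (sat : M → L → Prop) (A : Set L) : Set M :=
  {m | ∀ a ∈ A, sat m a}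

/-- `ThSet sat X` is the set of formulas satisfied by every model of `X`. -/
def ThSet {M L : Type*} (sat : M → L → Prop) (X : Set M) : Set L :=
  {a | ∀ m ∈ X, sat m a}

/-!
Canonical models: the models are the maximal consistent sets `T` (consistent meaning `C T ≠ L`),
which exist above every consistent set by Zorn's lemma and Weak Compactness, with `m ⊨ a ↔ a ∈ m`;
¬-R1, ¬-R2 and ∧-R make them behave classically. By ¬-R2 and Lindenbaum's lemma every `C`-closed
set is the theory of its models. The choice function sends `X` to the models of `C (Th X)` when
these lie inside `X` and fixes `X` otherwise; Cumulativity gives `C (Th (Mod A)) = C A`, hence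
`Th (f (Mod A)) = Th (Mod (C A)) = C A`.
-/

open Set

structure IsCumulative {L : Type*} (C : Set L → Set L) : Prop where
  inclusion : ∀ A, A ⊆ C A
  cumulativity : ∀ A B, A ⊆ B → B ⊆ C A → C A = C B

namespace IsCumulative

variable {L : Type*} {C : Set L → Set L}

theorem apply_apply (hC : IsCumulative C) (A : Set L) : C (C A) = C A :=
  (hC.cumulativity A (C A) (hC.inclusion A) subset_rfl).symm

theorem eq_univ_of_subset (hC : IsCumulative C) {A B : Set L} (hAB : A ⊆ B)
    (hA : C A = univ) : C B = univ := by
  rw [← hC.cumulativity A B hAB (hA ▸ subset_univ B), hA]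

end IsCumulative

section Galois

variable {M L : Type*} (sat : M → L → Prop)

theorem subset_thSet_modSet (A : Set L) : A ⊆ ThSet sat (ModSet sat A) :=
  fun _ ha _ hm => hm _ ha

theorem subset_modSet_thSet (X : Set M) : X ⊆ ModSet sat (ThSet sat X) :=
  fun _ hm _ ha => ha _ hm

theorem modSet_anti {A B : Set L} (h : A ⊆ B) : ModSet sat B ⊆ ModSet sat A :=
  fun _ hm a ha => hm a (h ha)

theorem thSet_anti {X Y : Set M} (h : X ⊆ Y) : ThSet sat Y ⊆ ThSet sat X :=
  fun _ ha m hm => ha m (h hm)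

theorem thSet_empty : ThSet sat (∅ : Set M) = univ :=
  eq_univ_of_forall fun _ _ hm => hm.elim

end Galois

section ChoiceFunction

variable {M L : Type*} {C : Set L → Set L} {sat : M → L → Prop}

open scoped Classical in
def closureChoice (C : Set L → Set L) (sat : M → L → Prop) (X : Set M) : Set M :=
  if ModSet sat (C (ThSet sat X)) ⊆ X then ModSet sat (C (ThSet sat X)) else X

theorem closureChoice_subset (X : Set M) : closureChoice C sat X ⊆ X := by
  unfold closureChoice
  split_ifs with h
  · exact h
  · exact subset_rfl

theorem closureChoice_eq_of_subset (hC : IsCumulative C)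
    (hrep : ∀ A, ThSet sat (ModSet sat (C A)) = C A)
    {X Y : Set M} (hfY : closureChoice C sat X ⊆ Y) (hYX : Y ⊆ X) :
    closureChoice C sat Y = closureChoice C sat X := by
  unfold closureChoice at hfY ⊢
  split_ifs at hfY with hX
  · have hThY : C (ThSet sat Y) = C (ThSet sat X) := by
      refine (hC.cumulativity _ _ (thSet_anti sat hYX) ?_).symm
      calc ThSet sat Y ⊆ ThSet sat (ModSet sat (C (ThSet sat X))) := thSet_anti sat hfY
        _ = C (ThSet sat X) := hrep _
    rw [hThY, if_pos (hThY ▸ hfY), if_pos hX]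
  · rw [hYX.antisymm hfY]

theorem closureChoice_modSet (hC : IsCumulative C)
    (hrep : ∀ A, ThSet sat (ModSet sat (C A)) = C A)
    (A : Set L) : closureChoice C sat (ModSet sat A) = ModSet sat (C A) := by
  have hsub : ModSet sat (C A) ⊆ ModSet sat A := modSet_anti sat (hC.inclusion A)
  have hTh : C (ThSet sat (ModSet sat A)) = C A := by
    refine (hC.cumulativity _ _ (subset_thSet_modSet sat A) ?_).symm
    calc ThSet sat (ModSet sat A) ⊆ ThSet sat (ModSet sat (C A)) := thSet_anti sat hsub
      _ = C A := hrep A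
  rw [closureChoice, hTh, if_pos hsub]

theorem eq_thSet_closureChoice_modSet (hC : IsCumulative C)
    (hrep : ∀ A, ThSet sat (ModSet sat (C A)) = C A)
    (A : Set L) : C A = ThSet sat (closureChoice C sat (ModSet sat A)) := by
  rw [closureChoice_modSet hC hrep, hrep]

theorem eq_empty_of_closureChoice_eq_empty
    (hrep : ∀ A, ThSet sat (ModSet sat (C A)) = C A)
    (hsound : ∀ A, (ModSet sat A).Nonempty → C A ≠ univ) {X : Set M}
    (hX : closureChoice C sat X = ∅) : X = ∅ := by
  refine eq_empty_of_subset_empty fun m hm => ?_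
  have hcons : C (ThSet sat X) ≠ univ := hsound _ ⟨m, subset_modSet_thSet sat X hm⟩
  unfold closureChoice at hX
  split_ifs at hX
  · exact hcons (by rw [← hrep, hX, thSet_empty])
  · exact hX ▸ hm

end ChoiceFunction

section MaximalConsistent

variable {L : Type*} {C : Set L → Set L}

theorem exists_maximal_consistent_superset (hC : IsCumulative C)
    (hWC : ∀ A : Set L, C A = univ → ∃ B : Set L, B ⊆ A ∧ B.Finite ∧ C B = univ)
    {A : Set L} (hA : C A ≠ univ) : ∃ T, A ⊆ T ∧ Maximal (fun T => C T ≠ univ) T := by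
  refine zorn_subset_nonempty {B | C B ≠ univ} (fun c hc hchain hne => ?_) A hA
  refine ⟨⋃₀ c, fun hU => ?_, fun s hs => subset_sUnion_of_mem hs⟩
  obtain ⟨B, hBU, hBfin, hB⟩ := hWC _ hU
  obtain ⟨s, hs, hBs⟩ :=
    hchain.directedOn.exists_mem_subset_of_finite_of_subset_sUnion hne hBfin hBU
  exact hc hs (hC.eq_univ_of_subset hBs hB)

variable {T : Set L}

theorem Maximal.apply_eq_self (hC : IsCumulative C) (hT : Maximal (fun T => C T ≠ univ) T) :
    C T = T :=
  (hT.eq_of_subset (show C (C T) ≠ univ by rw [hC.apply_apply]; exact hT.prop)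
    (hC.inclusion T)).symm

theorem Maximal.neg_mem_iff (hC : IsCumulative C) (hT : Maximal (fun T => C T ≠ univ) T)
    {neg : L → L}
    (hneg1 : ∀ (A : Set L) (a : L), C (A ∪ {a, neg a}) = univ)
    (hneg2 : ∀ (A : Set L) (a : L), C (A ∪ {neg a}) = univ → a ∈ C A) (a : L) :
    neg a ∈ T ↔ a ∉ T := by
  refine ⟨fun hna ha => hT.prop ?_, fun ha => ?_⟩
  · rw [← union_eq_self_of_subset_right (pair_subset ha hna)]
    exact hneg1 T a
  · by_cases h : C (T ∪ {neg a}) = univ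
    · exact absurd (hT.apply_eq_self hC ▸ hneg2 T a h) ha
    · exact hT.eq_of_subset h subset_union_left ▸ mem_union_right T rfl

theorem Maximal.conj_mem_iff (hC : IsCumulative C) (hT : Maximal (fun T => C T ≠ univ) T)
    {conj : L → L → L}
    (hconjR : ∀ (A : Set L) (a b : L), C (A ∪ {conj a b}) = C (A ∪ {a, b})) (a b : L) :
    conj a b ∈ T ↔ a ∈ T ∧ b ∈ T := by
  have hTc := hT.apply_eq_self hC
  constructor
  · intro hab
    have hsub : T ∪ {a, b} ⊆ T :=
      calc T ∪ {a, b} ⊆ C (T ∪ {a, b}) := hC.inclusion _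
        _ = C (T ∪ {conj a b}) := (hconjR T a b).symm
        _ = T := by rw [union_eq_self_of_subset_right (singleton_subset_iff.mpr hab), hTc]
    exact ⟨hsub (by simp), hsub (by simp)⟩
  · rintro ⟨ha, hb⟩
    have hsub : T ∪ {conj a b} ⊆ T :=
      calc T ∪ {conj a b} ⊆ C (T ∪ {conj a b}) := hC.inclusion _
        _ = C (T ∪ {a, b}) := hconjR T a b
        _ = T := by rw [union_eq_self_of_subset_right (pair_subset ha hb), hTc]
    exact hsub (mem_union_right T rfl)

end MaximalConsistent

def CanonicalModel {L : Type*} (C : Set L → Set L) : Type _ :=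
  {T : Set L // Maximal (fun T => C T ≠ univ) T}

namespace CanonicalModel

variable {L : Type*} {C : Set L → Set L}

def Sat (m : CanonicalModel C) (a : L) : Prop := a ∈ m.1

theorem apply_ne_univ_of_modSet_nonempty (hC : IsCumulative C) {A : Set L}
    (hA : (ModSet (Sat (C := C)) A).Nonempty) : C A ≠ univ := by
  obtain ⟨m, hm⟩ := hA
  exact fun h => m.2.prop (hC.eq_univ_of_subset hm h)

theorem thSet_modSet_of_apply_eq (hC : IsCumulative C) {neg : L → L}
    (hWC : ∀ A : Set L, C A = univ → ∃ B : Set L, B ⊆ A ∧ B.Finite ∧ C B = univ)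
    (hneg1 : ∀ (A : Set L) (a : L), C (A ∪ {a, neg a}) = univ)
    (hneg2 : ∀ (A : Set L) (a : L), C (A ∪ {neg a}) = univ → a ∈ C A)
    {D : Set L} (hD : C D = D) : ThSet (Sat (C := C)) (ModSet Sat D) = D := by
  refine subset_antisymm (fun a ha => ?_) (subset_thSet_modSet _ D)
  by_contra haD
  have hcons : C (D ∪ {neg a}) ≠ univ := fun h => haD (hD ▸ hneg2 D a h)
  obtain ⟨T, hDT, hT⟩ := exists_maximal_consistent_superset hC hWC hcons
  have haT : a ∈ T := ha ⟨T, hT⟩ (subset_union_left.trans hDT)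
  exact (hT.neg_mem_iff hC hneg1 hneg2 a).mp (hDT (mem_union_right D rfl)) haT

end CanonicalModel

open CanonicalModel in
theorem stmt_15_general {L : Type u} (conj : L → L → L) (neg : L → L)
    (C : Set L → Set L)
    (hWC : ∀ A : Set L, C A = Set.univ → ∃ B : Set L, B ⊆ A ∧ B.Finite ∧ C B = Set.univ)
    (hIncl : ∀ A : Set L, A ⊆ C A)
    (hCum : ∀ A B : Set L, A ⊆ B → B ⊆ C A → C A = C B)
    (hconjR : ∀ (A : Set L) (a b : L), C (A ∪ {conj a b}) = C (A ∪ {a, b}))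
    (hneg1 : ∀ (A : Set L) (a : L), C (A ∪ {a, neg a}) = Set.univ)
    (hneg2 : ∀ (A : Set L) (a : L), C (A ∪ {neg a}) = Set.univ → a ∈ C A) :
    ∃ (M : Type u) (sat : M → L → Prop) (f : Set M → Set M),
      (∀ X : Set M, f X ⊆ X) ∧
      (∀ X Y : Set M, f X ⊆ Y → Y ⊆ X → f Y = f X) ∧
      (∀ X : Set M, f X = ∅ → X = ∅) ∧
      (∀ (m : M) (a b : L), sat m (conj a b) ↔ sat m a ∧ sat m b) ∧
      (∀ (m : M) (a : L), sat m (neg a) ↔ ¬ sat m a) ∧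
      (∀ A : Set L, C A = ThSet sat (f (ModSet sat A))) := by
  have hC : IsCumulative C := ⟨hIncl, hCum⟩
  have hrep : ∀ A, ThSet (Sat (C := C)) (ModSet Sat (C A)) = C A := fun A =>
    thSet_modSet_of_apply_eq hC hWC hneg1 hneg2 (hC.apply_apply A)
  exact ⟨CanonicalModel C, Sat, closureChoice C Sat,
    closureChoice_subset,
    fun _ _ => closureChoice_eq_of_subset hC hrep,
    fun _ => eq_empty_of_closureChoice_eq_empty hrep
      fun _ => apply_ne_univ_of_modSet_nonempty hC,
    fun m => m.2.conj_mem_iff hC hconjR,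
    fun m => m.2.neg_mem_iff hC hneg1 hneg2,
    eq_thSet_closureChoice_modSet hC hrep⟩

/-- Representation with connectives: every operation satisfying Weak Compactness,
Inclusion, Cumulativity, ∧-R, ¬-R1 and ¬-R2 is defined by a restricted fC-model whose
satisfaction relation behaves classically with respect to `∧` and `¬`. -/
theorem stmt_15 {L : Type u} [Nonempty L] (conj : L → L → L) (neg : L → L)
    (C : Set L → Set L)
    (hWC : ∀ A : Set L, C A = Set.univ → ∃ B : Set L, B ⊆ A ∧ B.Finite ∧ C B = Set.univ)
    (hIncl : ∀ A : Set L, A ⊆ C A)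
    (hCum : ∀ A B : Set L, A ⊆ B → B ⊆ C A → C A = C B)
    (hconjR : ∀ (A : Set L) (a b : L), C (A ∪ {conj a b}) = C (A ∪ {a, b}))
    (hneg1 : ∀ (A : Set L) (a : L), C (A ∪ {a, neg a}) = Set.univ)
    (hneg2 : ∀ (A : Set L) (a : L), C (A ∪ {neg a}) = Set.univ → a ∈ C A) :
    ∃ (M : Type u) (sat : M → L → Prop) (f : Set M → Set M),
      (∀ X : Set M, f X ⊆ X) ∧
      (∀ X Y : Set M, f X ⊆ Y → Y ⊆ X → f Y = f X) ∧
      (∀ X : Set M, f X = ∅ → X = ∅) ∧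
      (∀ (m : M) (a b : L), sat m (conj a b) ↔ sat m a ∧ sat m b) ∧
      (∀ (m : M) (a : L), sat m (neg a) ↔ ¬ sat m a) ∧
      (∀ A : Set L, C A = ThSet sat (f (ModSet sat A))) :=
  stmt_15_general conj neg C hWC hIncl hCum hconjR hneg1 hneg2
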